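/- There is an absolute constant C ≤ 2 such that for all vectors n, m ∈ ℝ³ one has |⟨n + m⟩ − ⟨m⟩ − (n·m)/⟨m⟩| ≤ C ⟨n⟩²/⟨m⟩. -/

import Mathlib

open scoped RealInnerProductSpace

/-- Japanese bracket of `x ∈ ℝ³`: `⟨x⟩ = (1 + |x|²)^{1/2}`. -/
noncomputable def jbE (x : EuclideanSpace ℝ (Fin 3)) : ℝ :=
  Real.sqrt (1 + ‖x‖ ^ 2)

/-! Writing `a = ⟨n + m⟩`, `b = ⟨m⟩`, the identity `a² - b² = |n|² + 2 n·m` rearranges to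
`a - b - (n·m)/b = (|n|² - (a - b)²) / (2b)`, and `|a - b| ≤ |n|` because the bracket is
1-Lipschitz. Hence the remainder lies in `[0, |n|²/(2⟨m⟩)]`, so `C = 1/2` already works. -/

theorem abs_sqrt_one_add_sq_sub_le (s t : ℝ) :
    |√(1 + s ^ 2) - √(1 + t ^ 2)| ≤ |s - t| := by
  have hs : √(1 + s ^ 2) ^ 2 = 1 + s ^ 2 := Real.sq_sqrt (by positivity)
  have ht : √(1 + t ^ 2) ^ 2 = 1 + t ^ 2 := Real.sq_sqrt (by positivity)
  have cauchy_schwarz : 1 + s * t ≤ √(1 + s ^ 2) * √(1 + t ^ 2) := by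
    rw [← Real.sqrt_mul (by positivity)]
    exact (le_abs_self _).trans (Real.abs_le_sqrt (by nlinarith [sq_nonneg (s - t)]))
  rw [← sq_le_sq]
  nlinarith

theorem abs_sub_sub_div_le_of_sq_sub_sq {a b p ν : ℝ} (hb : 0 < b)
    (hsq : a ^ 2 - b ^ 2 = ν ^ 2 + 2 * p) (hab : |a - b| ≤ ν) :
    |a - b - p / b| ≤ ν ^ 2 / (2 * b) := by
  have remainder_eq : a - b - p / b = (ν ^ 2 - (a - b) ^ 2) / (2 * b) := by
    field_simp
    linear_combination hsq
  have hsq_le : (a - b) ^ 2 ≤ ν ^ 2 := by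
    rw [← sq_abs]
    exact pow_le_pow_left₀ (abs_nonneg _) hab 2
  rw [remainder_eq, abs_div, abs_of_pos (by positivity : 0 < 2 * b), abs_of_nonneg (by linarith)]
  gcongr
  linarith [sq_nonneg (a - b)]

theorem jbE_sq (x : EuclideanSpace ℝ (Fin 3)) : jbE x ^ 2 = 1 + ‖x‖ ^ 2 :=
  Real.sq_sqrt (by positivity)

theorem jbE_pos (x : EuclideanSpace ℝ (Fin 3)) : 0 < jbE x :=
  Real.sqrt_pos.2 (by positivity)

theorem abs_jbE_sub_jbE_le (x y : EuclideanSpace ℝ (Fin 3)) : |jbE x - jbE y| ≤ ‖x - y‖ :=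
  (abs_sqrt_one_add_sq_sub_le ‖x‖ ‖y‖).trans (abs_norm_sub_norm_le x y)

theorem bracket_taylor_remainder :
    ∃ C : ℝ, 0 < C ∧ C ≤ 2 ∧ ∀ n m : EuclideanSpace ℝ (Fin 3),
      |jbE (n + m) - jbE m - ⟪n, m⟫ / jbE m| ≤ C * jbE n ^ 2 / jbE m := by
  refine ⟨1 / 2, by norm_num, by norm_num, fun n m => ?_⟩
  have hsq : jbE (n + m) ^ 2 - jbE m ^ 2 = ‖n‖ ^ 2 + 2 * ⟪n, m⟫ := by
    rw [jbE_sq, jbE_sq, norm_add_sq_real]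
    ring
  have hdiff : |jbE (n + m) - jbE m| ≤ ‖n‖ := by
    simpa using abs_jbE_sub_jbE_le (n + m) m
  have hm : 0 < jbE m := jbE_pos m
  calc _ ≤ ‖n‖ ^ 2 / (2 * jbE m) := abs_sub_sub_div_le_of_sq_sub_sq hm hsq hdiff
    _ = 1 / 2 * ‖n‖ ^ 2 / jbE m := by ring
    _ ≤ 1 / 2 * jbE n ^ 2 / jbE m := by
      rw [jbE_sq]
      gcongr
      linarith
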